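/- arXiv:1601.02391 — 6 statements merged into one kernel-verified Lean document; each statement's English description precedes it below -/
import Mathlib

section
/- For any fractional ideal I of the ring of integers O_F of a totally complex number field F of degree 2k, the shortest nonzero vector of the lattice ψ(I) obtained by the relative canonical embedding ψ: F → ℂ^k satisfies λ₁(ψ(I)) ≥ √k · N(I)^{1/(2k)}, where N(I) is the absolute norm of I. -/
open NumberField
open scoped nonZeroDivisors

/-! For `0 ≠ x ∈ I` the principal ideal `(x)` factors as `I * J` with `J` integral, so
`N(I) ≤ N(I) N(J) = |N(x)|`. Since every infinite place of `F` is complex and is hit by exactly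
one `σᵢ`, `|N(x)| = ∏ᵢ ‖σᵢ x‖²`. AM–GM then gives
`∑ᵢ ‖σᵢ x‖² ≥ k (∏ᵢ ‖σᵢ x‖²)^(1/k) ≥ k N(I)^(1/k)`, and the claim follows by taking
square roots. -/

namespace FractionalIdeal

variable {K : Type*} [Field K] [NumberField K]

theorem absNorm_le_abs_norm_of_mem {I : FractionalIdeal (𝓞 K)⁰ K} {x : K} (hx : x ∈ I)
    (hx0 : x ≠ 0) : absNorm I ≤ |Algebra.norm ℚ x| := by
  have hI : I ≠ 0 := fun h => hx0 (by simpa [h] using hx)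
  obtain ⟨J, hJ⟩ :
      ∃ J : Ideal (𝓞 K), (J : FractionalIdeal (𝓞 K)⁰ K) = I⁻¹ * spanSingleton (𝓞 K)⁰ x :=
    le_one_iff_exists_coeIdeal.mp <| calc
      I⁻¹ * spanSingleton (𝓞 K)⁰ x ≤ I⁻¹ * I := by
        gcongr; exact spanSingleton_le_iff_mem.mpr hx
      _ = 1 := inv_mul_cancel₀ hI
  have hspan : spanSingleton (𝓞 K)⁰ x = I * J := by
    rw [hJ, ← mul_assoc, mul_inv_cancel₀ hI, one_mul]
  have hJ0 : J ≠ ⊥ := by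
    rintro rfl
    simp_all [spanSingleton_eq_zero_iff]
  have hJ1 : (1 : ℚ) ≤ Ideal.absNorm J := by
    exact_mod_cast Nat.one_le_iff_ne_zero.mpr (Ideal.absNorm_eq_zero_iff.not.mpr hJ0)
  calc absNorm I ≤ absNorm I * Ideal.absNorm J := le_mul_of_one_le_right (absNorm_nonneg I) hJ1
    _ = |Algebra.norm ℚ x| := by
      rw [← absNorm_span_singleton (𝓞 K), hspan, map_mul, coeIdeal_absNorm]

end FractionalIdeal

namespace NumberField.InfinitePlace

variable {F : Type*} [Field F] {ι : Type*} {σ : ι → F →+* ℂ}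

theorem bijective_mk_of_existsUnique
    (hσ : ∀ φ : F →+* ℂ, ∃! i, φ = σ i ∨ φ = (starRingEnd ℂ).comp (σ i)) :
    Function.Bijective (fun i => mk (σ i)) := by
  refine ⟨fun i j hij => ?_, fun w => ?_⟩
  · obtain ⟨_, -, hm⟩ := hσ (σ i)
    rcases mk_eq_iff.mp hij.symm with h | h
    · exact (hm i (.inl rfl)).trans (hm j (.inl h.symm)).symm
    · exact (hm i (.inl rfl)).trans (hm j (.inr h.symm)).symm
  · obtain ⟨i, hi, -⟩ := hσ w.embedding
    refine ⟨i, ?_⟩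
    rcases hi with h | h
    · rw [← mk_embedding w, h]
    · rw [← mk_embedding w, h]
      exact (mk_conjugate_eq (σ i)).symm

theorem prod_norm_sq_eq_abs_norm [NumberField F] [Fintype ι]
    (hcx : ∀ i, σ i ≠ (starRingEnd ℂ).comp (σ i))
    (hσ : ∀ φ : F →+* ℂ, ∃! i, φ = σ i ∨ φ = (starRingEnd ℂ).comp (σ i)) (x : F) :
    ∏ i, ‖σ i x‖ ^ 2 = |(Algebra.norm ℚ x : ℝ)| := by
  have hmult (i : ι) : mult (mk (σ i)) = 2 :=
    IsComplex.mult_eq_two <| isComplex_mk_iff.mpr fun h =>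
      hcx i (ComplexEmbedding.isReal_iff.mp h).symm
  rw [← Rat.cast_abs, ← prod_eq_abs_norm, ← (bijective_mk_of_existsUnique hσ).prod_comp]
  simp only [hmult, apply]

end NumberField.InfinitePlace

theorem Real.card_mul_prod_rpow_one_div_card_le_sum {ι : Type*} [Fintype ι] {z : ι → ℝ}
    (hz : ∀ i, 0 ≤ z i) :
    (Fintype.card ι : ℝ) * (∏ i, z i) ^ (1 / (Fintype.card ι : ℝ)) ≤ ∑ i, z i := by
  rcases (Fintype.card ι).eq_zero_or_pos with h | h
  · simp [h, Finset.sum_nonneg fun i _ => hz i]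
  have hamgm := Real.geom_mean_le_arith_mean Finset.univ (fun _ => 1) z (fun _ _ => zero_le_one)
    (by simpa using h) fun i _ => hz i
  simp only [Real.rpow_one, one_mul, Finset.sum_const, Finset.card_univ, nsmul_eq_mul, mul_one]
    at hamgm
  rwa [one_div, mul_comm, ← le_div_iff₀ (by exact_mod_cast h)]

theorem shortest_vector_fractional_ideal_lower_bound_general
    (F : Type*) [Field F] [NumberField F] (k : ℕ)
    (σ : Fin k → (F →+* ℂ))
    (hcx : ∀ i, σ i ≠ (starRingEnd ℂ).comp (σ i))
    (hσ : ∀ φ : F →+* ℂ, ∃! i : Fin k, φ = σ i ∨ φ = (starRingEnd ℂ).comp (σ i))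
    (I : FractionalIdeal (𝓞 F)⁰ F)
    (x : F) (hx : x ∈ I) (hx0 : x ≠ 0) :
    Real.sqrt (∑ i, ‖σ i x‖ ^ 2)
      ≥ Real.sqrt k * (FractionalIdeal.absNorm I : ℝ) ^ ((1 : ℝ) / (2 * k)) := by
  have hN0 : (0 : ℝ) ≤ FractionalIdeal.absNorm I := by
    exact_mod_cast FractionalIdeal.absNorm_nonneg I
  have hN : (FractionalIdeal.absNorm I : ℝ) ≤ ∏ i, ‖σ i x‖ ^ 2 := by
    rw [InfinitePlace.prod_norm_sq_eq_abs_norm hcx hσ, ← Rat.cast_abs]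
    exact_mod_cast FractionalIdeal.absNorm_le_abs_norm_of_mem hx hx0
  set N : ℝ := (FractionalIdeal.absNorm I : ℝ)
  have hamgm := Real.card_mul_prod_rpow_one_div_card_le_sum fun i => sq_nonneg ‖σ i x‖
  rw [Fintype.card_fin] at hamgm
  calc Real.sqrt k * N ^ ((1 : ℝ) / (2 * k)) = Real.sqrt (k * N ^ ((1 : ℝ) / k)) := by
        rw [Real.sqrt_mul (Nat.cast_nonneg k), Real.sqrt_eq_rpow (N ^ _), ← Real.rpow_mul hN0,
          one_div_mul_one_div, mul_comm (k : ℝ)]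
    _ ≤ Real.sqrt (k * (∏ i, ‖σ i x‖ ^ 2) ^ ((1 : ℝ) / k)) := by gcongr
    _ ≤ Real.sqrt (∑ i, ‖σ i x‖ ^ 2) := Real.sqrt_le_sqrt hamgm

/-- For any nonzero fractional ideal `I` of the ring of integers of a
totally complex number field `F` of degree `2k`, every nonzero element `x ∈ I` satisfies
`‖ψ(x)‖ ≥ √k · N(I)^(1/(2k))`, where `ψ(x) = (σ₁(x), …, σ_k(x))` is the relative canonical
embedding (one embedding chosen from each complex-conjugate pair) and the norm on `ℂᵏ` comes
from the real inner product `⟨x,y⟩ = Re(x†y)`. -/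
theorem shortest_vector_fractional_ideal_lower_bound
    (F : Type*) [Field F] [NumberField F] (k : ℕ) (hk : 0 < k)
    (σ : Fin k → (F →+* ℂ))
    (hdeg : Module.finrank ℚ F = 2 * k)
    (hcx : ∀ i, σ i ≠ (starRingEnd ℂ).comp (σ i))
    (hσ : ∀ φ : F →+* ℂ, ∃! i : Fin k, φ = σ i ∨ φ = (starRingEnd ℂ).comp (σ i))
    (I : FractionalIdeal (𝓞 F)⁰ F) (hI : I ≠ 0)
    (x : F) (hx : x ∈ I) (hx0 : x ≠ 0) :
    Real.sqrt (∑ i, ‖σ i x‖ ^ 2)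
      ≥ Real.sqrt k * (FractionalIdeal.absNorm I : ℝ) ^ ((1 : ℝ) / (2 * k)) :=
  shortest_vector_fractional_ideal_lower_bound_general F k σ hcx hσ I x hx hx0
end

section
/- Let F be a totally complex number field of degree 2k and ψ the relative canonical embedding into ℂ^k. Then the dual lattice of Λ = ψ(O_F), with respect to the inner product ⟨x,y⟩ = Re(x†y), equals Λ* = 2·conj(ψ(O_F^∨)), where conj denotes componentwise complex conjugation. -/
open NumberField
open scoped nonZeroDivisors ComplexConjugate

/-!
Write `⟪x, ψ a⟫ = Re ∑ conj (xᵢ) σᵢ(a)`. The embeddings `σᵢ, conj ∘ σᵢ` enumerate all embeddings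
`F →+* ℂ` once each, so `⟪2 conj ψ(c), ψ(a)⟫ = Tr(c a)`, which gives `⊇`. Conversely, `x ↦ ⟪x, ψ ·⟫`
is injective by Dedekind's independence of these `2k` characters, and the ℚ-linear functional on `F`
taking the integer values `⟪x, ψ bⱼ⟫` on an integral basis `bⱼ` is `Tr(c ·)` for some `c` by
nondegeneracy of the trace form. Hence `x = 2 conj ψ(c)`, and `c ∈ O_F^∨`.
-/

section Embeddings

variable {F : Type*} [Field F] {k : ℕ} (σ : Fin k → (F →+* ℂ))

def embeddingsWithConj : Fin k ⊕ Fin k → (F →+* ℂ) :=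
  Sum.elim σ fun i => (starRingEnd ℂ).comp (σ i)

variable {σ} in
lemma bijective_embeddingsWithConj (hcx : ∀ i, σ i ≠ (starRingEnd ℂ).comp (σ i))
    (hσ : ∀ φ : F →+* ℂ, ∃! i : Fin k, φ = σ i ∨ φ = (starRingEnd ℂ).comp (σ i)) :
    Function.Bijective (embeddingsWithConj σ) := by
  have hconj_conj : ∀ φ : F →+* ℂ, (starRingEnd ℂ).comp ((starRingEnd ℂ).comp φ) = φ :=
    fun φ => RingHom.ext fun _ => Complex.conj_conj _
  have eq_of_related : ∀ i j, σ i = σ j ∨ σ i = (starRingEnd ℂ).comp (σ j) → i = j :=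
    fun i j hij => (hσ (σ i)).unique (Or.inl rfl) hij
  refine ⟨?_, fun φ => ?_⟩
  · rintro (i | i) (j | j) h <;> simp only [embeddingsWithConj, Sum.elim_inl, Sum.elim_inr] at h
    · rw [eq_of_related i j (.inl h)]
    · obtain rfl := eq_of_related i j (.inr h)
      exact absurd h (hcx i)
    · obtain rfl := eq_of_related j i (.inr h.symm)
      exact absurd h.symm (hcx j)
    · rw [eq_of_related i j (.inl (by rw [← hconj_conj (σ i), h, hconj_conj]))]
  · obtain ⟨i, hi | hi, -⟩ := hσ φ
    exacts [⟨.inl i, hi.symm⟩, ⟨.inr i, hi.symm⟩]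

variable [CharZero F]

noncomputable def pairing (x : Fin k → ℂ) : F →ₗ[ℚ] ℝ :=
  AddMonoidHom.toRatLinearMap
    { toFun a := (∑ i, conj (x i) * σ i a).re
      map_zero' := by simp
      map_add' a b := by simp [mul_add, Finset.sum_add_distrib] }

variable {σ}

lemma pairing_apply (x : Fin k → ℂ) (a : F) :
    pairing σ x a = (∑ i, conj (x i) * σ i a).re := rfl

lemma pairing_injective (h : Function.Injective (embeddingsWithConj σ)) :
    Function.Injective (pairing σ) := by
  intro x y hxy
  have hindep := (linearIndependent_monoidHom F ℂ).comp (fun s => (embeddingsWithConj σ s : F →* ℂ))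
    fun s t hst => h (RingHom.ext fun a => DFunLike.congr_fun hst a)
  have hcoeff := Fintype.linearIndependent_iff.1 hindep
    (Sum.elim (fun i => conj (x i - y i)) (fun i => x i - y i)) ?_
  · funext i
    simpa [sub_eq_zero] using hcoeff (.inr i)
  · funext a
    have hre : (∑ i, conj (x i - y i) * σ i a).re = 0 := by
      simpa [pairing_apply, sub_mul, Finset.sum_sub_distrib, sub_eq_zero] using
        DFunLike.congr_fun hxy a
    calc _ = (∑ i, conj (x i - y i) * σ i a) + conj (∑ i, conj (x i - y i) * σ i a) := by
          simp [Fintype.sum_sum_type, embeddingsWithConj, mul_comm]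
      _ = 0 := by rw [Complex.add_conj, hre]; simp

end Embeddings

lemma exists_trace_mul_eq (K L : Type*) [Field K] [Field L] [Algebra K L] [FiniteDimensional K L]
    [Algebra.IsSeparable K L] (f : L →ₗ[K] K) : ∃ c : L, ∀ a, Algebra.trace K L (c * a) = f a :=
  ⟨(Algebra.traceForm K L).toDual (traceForm_nondegenerate K L) |>.symm f, fun a => by
    rw [← Algebra.traceForm_apply, ← LinearMap.BilinForm.toDual_def (traceForm_nondegenerate K L),
      LinearEquiv.apply_symm_apply]⟩

lemma mem_dual_one_iff {F : Type*} [Field F] [NumberField F] {c : F} :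
    c ∈ FractionalIdeal.dual ℤ ℚ (1 : FractionalIdeal (𝓞 F)⁰ F) ↔
      ∀ a : 𝓞 F, ∃ n : ℤ, Algebra.trace ℚ F (c * a) = n := by
  rw [FractionalIdeal.mem_dual (I := (1 : FractionalIdeal (𝓞 F)⁰ F)) one_ne_zero]
  simp [FractionalIdeal.mem_one_iff, eq_comm]

section NumberField

variable {F : Type*} [Field F] [NumberField F] {k : ℕ} {σ : Fin k → (F →+* ℂ)}

lemma trace_eq_two_mul_re_sum (h : Function.Bijective (embeddingsWithConj σ)) (y : F) :
    (Algebra.trace ℚ F y : ℝ) = 2 * (∑ i, σ i y).re := by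
  have hsum : algebraMap ℚ ℂ (Algebra.trace ℚ F y) = ∑ i, σ i y + conj (∑ i, σ i y) := by
    rw [trace_eq_sum_embeddings ℂ, ← (RingHom.equivRatAlgHom F ℂ).sum_comp,
      ← (Equiv.ofBijective _ h).sum_comp]
    simp [Fintype.sum_sum_type, embeddingsWithConj, RingHom.equivRatAlgHom_apply]
  rw [Complex.add_conj] at hsum
  simpa using congrArg Complex.re hsum

lemma pairing_two_mul_conj (h : Function.Bijective (embeddingsWithConj σ)) (c a : F) :
    pairing σ (fun i => 2 * conj (σ i c)) a = Algebra.trace ℚ F (c * a) := by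
  rw [pairing_apply, trace_eq_two_mul_re_sum h]
  simp [Complex.mul_re, Finset.mul_sum, mul_sub, mul_assoc]

lemma exists_eq_two_mul_conj_of_pairing_int (h : Function.Bijective (embeddingsWithConj σ))
    {x : Fin k → ℂ} (hx : ∀ a : 𝓞 F, ∃ n : ℤ, pairing σ x a = n) :
    ∃ c : F, x = fun i => 2 * conj (σ i c) := by
  choose n hn using fun j => hx (RingOfIntegers.basis F j)
  obtain ⟨c, hc⟩ := exists_trace_mul_eq ℚ F ((integralBasis F).constr ℚ fun j => (n j : ℚ))
  refine ⟨c, pairing_injective h.injective ((integralBasis F).ext fun j => ?_)⟩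
  rw [pairing_two_mul_conj h, hc, Module.Basis.constr_basis, integralBasis_apply,
    ← RingOfIntegers.coe_eq_algebraMap, hn]
  simp

end NumberField

theorem dual_lattice_eq_two_conj_codifferent_general
    (F : Type*) [Field F] [NumberField F] (k : ℕ)
    (σ : Fin k → (F →+* ℂ))
    (hcx : ∀ i, σ i ≠ (starRingEnd ℂ).comp (σ i))
    (hσ : ∀ φ : F →+* ℂ, ∃! i : Fin k, φ = σ i ∨ φ = (starRingEnd ℂ).comp (σ i)) :
    {x : Fin k → ℂ | ∀ a : 𝓞 F,
        ∃ n : ℤ, (∑ i, starRingEnd ℂ (x i) * σ i (a : F)).re = (n : ℝ)}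
      = (fun c : F => fun i => 2 * starRingEnd ℂ (σ i c)) ''
          {c : F | c ∈ FractionalIdeal.dual ℤ ℚ (1 : FractionalIdeal (𝓞 F)⁰ F)} := by
  have hbij := bijective_embeddingsWithConj hcx hσ
  ext x
  simp only [Set.mem_ofPred_eq, Set.mem_image, ← pairing_apply]
  constructor
  · intro hx
    obtain ⟨c, rfl⟩ := exists_eq_two_mul_conj_of_pairing_int hbij hx
    refine ⟨c, mem_dual_one_iff.2 fun a => ?_, rfl⟩
    obtain ⟨n, hn⟩ := hx a
    exact ⟨n, by exact_mod_cast (pairing_two_mul_conj hbij c a).symm.trans hn⟩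
  · rintro ⟨c, hc, rfl⟩ a
    obtain ⟨n, hn⟩ := mem_dual_one_iff.1 hc a
    exact ⟨n, by rw [pairing_two_mul_conj hbij, hn, Rat.cast_intCast]⟩

/-- For a totally complex number field `F` of degree `2k` with relative
canonical embedding `ψ(x) = (σ₁(x), …, σ_k(x)) ∈ ℂᵏ`, the dual of the lattice `Λ = ψ(O_F)`
with respect to the inner product `⟨x,y⟩ = Re(x†y)` equals `2·conj(ψ(O_F^∨))`, where
`O_F^∨` is the codifferent and `conj` is componentwise complex conjugation. -/
theorem dual_lattice_eq_two_conj_codifferent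
    (F : Type*) [Field F] [NumberField F] (k : ℕ) (hk : 0 < k)
    (σ : Fin k → (F →+* ℂ))
    (hdeg : Module.finrank ℚ F = 2 * k)
    (hcx : ∀ i, σ i ≠ (starRingEnd ℂ).comp (σ i))
    (hσ : ∀ φ : F →+* ℂ, ∃! i : Fin k, φ = σ i ∨ φ = (starRingEnd ℂ).comp (σ i)) :
    {x : Fin k → ℂ | ∀ a : 𝓞 F,
        ∃ n : ℤ, (∑ i, starRingEnd ℂ (x i) * σ i (a : F)).re = (n : ℝ)}
      = (fun c : F => fun i => 2 * starRingEnd ℂ (σ i c)) ''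
          {c : F | c ∈ FractionalIdeal.dual ℤ ℚ (1 : FractionalIdeal (𝓞 F)⁰ F)} :=
  dual_lattice_eq_two_conj_codifferent_general F k σ hcx hσ
end

section
/- For any full-rank lattice Λ ⊂ ℝ^n and 0 < ε < 1, if σ ≥ √n / (√π · λ₁(Λ*)) · c(ε) for a suitable constant c(ε) (in particular the smoothing parameter satisfies η_ε(Λ) ≤ 2√n / λ₁(Λ*) when ε = 2^{-n}), then ∑_{λ*∈Λ*\{0}} e^{-π σ² ‖λ*‖²} ≤ ε. -/
/-!
Put `c = √n / λ₁`. Two distinct dual vectors differ by a nonzero dual vector, so they cannot lie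
in the same cube of side `1 / c` of the grid `c⁻¹ ℤⁿ`; hence `x ↦ ⌊c x⌋` is injective on
`Λ* \ {0}`. Since `2 |⌊u⌋| ≤ u² + 3`, `c² ‖x‖² ≥ n` and `s ≥ 2c`, the Gaussian weight of a
nonzero dual vector `x` is at most `e^{-2πn} ∏ᵢ e^{-π |⌊c xᵢ⌋|}`, and summing this product weight
over all of `ℤⁿ` gives at most `(∑_{a ∈ ℤ} e^{-π |a|})ⁿ ≤ 2ⁿ`. Altogether the sum is at most
`(2 e^{-2π})ⁿ ≤ 2⁻ⁿ`.
-/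

open Finset Real

lemma two_mul_natAbs_floor_le (u : ℝ) : 2 * (⌊u⌋.natAbs : ℝ) ≤ u ^ 2 + 3 := by
  have hfloor : |(⌊u⌋ : ℝ)| ≤ |u| + 1 := abs_le.2
    ⟨by linarith [neg_abs_le u, Int.sub_one_lt_floor u],
      by linarith [le_abs_self u, Int.floor_le u]⟩
  rw [Nat.cast_natAbs, Int.cast_abs]
  nlinarith [sq_nonneg (|u| - 1), sq_abs u]

lemma hasSum_pow_natAbs {r : ℝ} (h₀ : 0 ≤ r) (h₁ : r < 1) :
    HasSum (fun a : ℤ ↦ r ^ a.natAbs) ((1 + r) / (1 - r)) := by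
  have hnonneg : HasSum (fun n : ℕ ↦ r ^ (n : ℤ).natAbs) (1 - r)⁻¹ := by
    simpa using hasSum_geometric_of_lt_one h₀ h₁
  have hneg : HasSum (fun n : ℕ ↦ r ^ (-(n + 1 : ℤ)).natAbs) (r * (1 - r)⁻¹) := by
    have hnatAbs : ∀ n : ℕ, (-(n + 1 : ℤ)).natAbs = n + 1 := fun n ↦ by omega
    simpa only [hnatAbs, pow_succ'] using (hasSum_geometric_of_lt_one h₀ h₁).mul_left r
  have hsum : (1 + r) / (1 - r) = (1 - r)⁻¹ + r * (1 - r)⁻¹ := by ring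
  exact hsum ▸ HasSum.of_nat_of_neg_add_one (f := fun a : ℤ ↦ r ^ a.natAbs) hnonneg hneg

lemma exp_neg_le_inv_four {z : ℝ} (hz : 3 ≤ z) : exp (-z) ≤ 4⁻¹ := by
  rw [exp_neg]
  exact inv_anti₀ (by norm_num) (by linarith [add_one_le_exp z])

section

variable {ι : Type*} [Fintype ι]

def integralDual (L : Set (ι → ℝ)) : Set (ι → ℝ) :=
  {x | ∀ y ∈ L, ∃ m : ℤ, ∑ i, x i * y i = m}

lemma sub_mem_integralDual {L : Set (ι → ℝ)} {x y : ι → ℝ} (hx : x ∈ integralDual L)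
    (hy : y ∈ integralDual L) : x - y ∈ integralDual L := by
  intro v hv
  obtain ⟨m, hm⟩ := hx v hv
  obtain ⟨m', hm'⟩ := hy v hv
  refine ⟨m - m', ?_⟩
  simp only [Pi.sub_apply, sub_mul, sum_sub_distrib, hm, hm', Int.cast_sub]

lemma injOn_floor_mul {S : Set (ι → ℝ)} {c : ℝ}
    (hsep : ∀ x ∈ S, ∀ y ∈ S, x ≠ y → (Fintype.card ι : ℝ) ≤ c ^ 2 * ∑ i, (x i - y i) ^ 2) :
    S.InjOn fun x i ↦ ⌊c * x i⌋ := by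
  intro x hx y hy hxy
  by_contra hne
  obtain ⟨j, -⟩ := Function.ne_iff.1 hne
  have hcoord : ∀ i, c ^ 2 * (x i - y i) ^ 2 < 1 := fun i ↦ by
    rw [← mul_pow, mul_sub, sq_lt_one_iff_abs_lt_one]
    exact Int.abs_sub_lt_one_of_floor_eq_floor (congrFun hxy i)
  have hlt : c ^ 2 * ∑ i, (x i - y i) ^ 2 < Fintype.card ι := by
    rw [mul_sum, Fintype.card_eq_sum_ones, Nat.cast_sum]
    exact sum_lt_sum_of_nonempty ⟨j, mem_univ j⟩ fun i _ ↦ by simpa using hcoord i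
  linarith [hsep x hx y hy hne]

lemma exp_neg_le_mul_prod_floor {c s : ℝ} (x : ι → ℝ)
    (hx : (Fintype.card ι : ℝ) ≤ c ^ 2 * ∑ i, x i ^ 2) (hs : 4 * c ^ 2 ≤ s ^ 2) :
    exp (-π * s ^ 2 * ∑ i, x i ^ 2)
      ≤ exp (-(2 * π)) ^ Fintype.card ι * ∏ i, exp (-π) ^ ⌊c * x i⌋.natAbs := by
  set A := ∑ i, x i ^ 2
  set T := ∑ i, (⌊c * x i⌋.natAbs : ℝ)
  have hT : 2 * T ≤ c ^ 2 * A + 3 * Fintype.card ι := by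
    calc 2 * T ≤ ∑ i, ((c * x i) ^ 2 + 3) := by
          rw [mul_sum]; exact sum_le_sum fun i _ ↦ two_mul_natAbs_floor_le _
      _ = c ^ 2 * A + 3 * Fintype.card ι := by
          simp [A, sum_add_distrib, mul_pow, mul_sum, mul_comm]
  have hsA : 4 * (c ^ 2 * A) ≤ s ^ 2 * A := by
    rw [← mul_assoc]; exact mul_le_mul_of_nonneg_right hs (by positivity)
  have key : 2 * Fintype.card ι + T ≤ s ^ 2 * A := by linarith
  rw [prod_pow_eq_pow_sum, ← exp_nat_mul, ← exp_nat_mul, ← exp_add, exp_le_exp]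
  push_cast
  nlinarith [mul_le_mul_of_nonneg_left key pi_pos.le]

lemma sum_prod_le_pow_card {κ : Type*} {w : κ → ℝ} {M : ℝ} (hw : ∀ a, 0 ≤ w a)
    (hM : ∀ u : Finset κ, ∑ a ∈ u, w a ≤ M) (t : Finset (ι → κ)) :
    ∑ k ∈ t, ∏ i, w (k i) ≤ M ^ Fintype.card ι := by
  classical
  have hsub : t ⊆ Fintype.piFinset fun i ↦ t.image (· i) := fun k hk ↦
    Fintype.mem_piFinset.2 fun i ↦ mem_image_of_mem _ hk
  calc ∑ k ∈ t, ∏ i, w (k i)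
      ≤ ∑ k ∈ Fintype.piFinset (fun i ↦ t.image (· i)), ∏ i, w (k i) :=
        sum_le_sum_of_subset_of_nonneg hsub fun k _ _ ↦ prod_nonneg fun i _ ↦ hw _
    _ = ∏ i, ∑ a ∈ t.image (· i), w a := (prod_univ_sum _ _).symm
    _ ≤ ∏ _i : ι, M := prod_le_prod (fun i _ ↦ sum_nonneg fun a _ ↦ hw a) fun i _ ↦ hM _
    _ = M ^ Fintype.card ι := by simp

theorem tsum_exp_neg_le_of_separated {S : Set (ι → ℝ)} {c s : ℝ}
    (hsep : ∀ x ∈ S, ∀ y ∈ S, x ≠ y → (Fintype.card ι : ℝ) ≤ c ^ 2 * ∑ i, (x i - y i) ^ 2)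
    (hnorm : ∀ x ∈ S, (Fintype.card ι : ℝ) ≤ c ^ 2 * ∑ i, x i ^ 2) (hs : 4 * c ^ 2 ≤ s ^ 2) :
    ∑' x : S, exp (-π * s ^ 2 * ∑ i, (x : ι → ℝ) i ^ 2) ≤ 2⁻¹ ^ Fintype.card ι := by
  set φ : S → ι → ℤ := fun x i ↦ ⌊c * (x : ι → ℝ) i⌋
  have hφ : φ.Injective := fun x y h ↦ Subtype.ext (injOn_floor_mul hsep x.2 y.2 h)
  have hr : exp (-π) ≤ 4⁻¹ := exp_neg_le_inv_four (by linarith [pi_gt_three])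
  have hK : exp (-(2 * π)) ≤ 4⁻¹ := exp_neg_le_inv_four (by linarith [pi_gt_three])
  have hw : ∀ u : Finset ℤ, ∑ a ∈ u, exp (-π) ^ a.natAbs ≤ 2 := fun u ↦
    (sum_le_hasSum u (fun _ _ ↦ by positivity)
      (hasSum_pow_natAbs (exp_pos _).le (by linarith))).trans
        (by rw [div_le_iff₀ (by linarith)]; linarith)
  refine tsum_le_of_sum_le' (by positivity) fun u ↦ ?_
  calc ∑ x ∈ u, exp (-π * s ^ 2 * ∑ i, (x : ι → ℝ) i ^ 2)
      ≤ ∑ x ∈ u, exp (-(2 * π)) ^ Fintype.card ι * ∏ i, exp (-π) ^ (φ x i).natAbs :=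
        sum_le_sum fun x _ ↦ exp_neg_le_mul_prod_floor (x : ι → ℝ) (hnorm x x.2) hs
    _ = exp (-(2 * π)) ^ Fintype.card ι * ∑ k ∈ u.image φ, ∏ i, exp (-π) ^ (k i).natAbs := by
        rw [← mul_sum, sum_image hφ.injOn]
    _ ≤ exp (-(2 * π)) ^ Fintype.card ι * 2 ^ Fintype.card ι := by
        gcongr
        exact sum_prod_le_pow_card (fun a ↦ by positivity) hw _
    _ = (2 * exp (-(2 * π))) ^ Fintype.card ι := by ring
    _ ≤ 2⁻¹ ^ Fintype.card ι := by gcongr; linarith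

end

theorem smoothing_parameter_le_of_dual_min_distance_general
    (n : ℕ) (B : Module.Basis (Fin n) ℝ (Fin n → ℝ)) (lam1 s : ℝ) (hlam : 0 < lam1)
    (hmin : ∀ x : Fin n → ℝ,
        (∀ y ∈ Submodule.span ℤ (Set.range B), ∃ m : ℤ, ∑ i, x i * y i = (m : ℝ)) →
        x ≠ 0 → lam1 ≤ Real.sqrt (∑ i, x i ^ 2))
    (hs : 2 * Real.sqrt n / lam1 ≤ s) :
    ∑' l : {x : Fin n → ℝ //
          (∀ y ∈ Submodule.span ℤ (Set.range B), ∃ m : ℤ, ∑ i, x i * y i = (m : ℝ)) ∧ x ≠ 0},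
        Real.exp (-π * s ^ 2 * ∑ i, (l : Fin n → ℝ) i ^ 2)
      ≤ (2 : ℝ)⁻¹ ^ n := by
  set dual := integralDual (Submodule.span ℤ (Set.range B) : Set (Fin n → ℝ))
  set c := √n / lam1
  have hc : c ^ 2 * lam1 ^ 2 = n := by
    rw [div_pow, sq_sqrt n.cast_nonneg]; field_simp
  have hnorm : ∀ x ∈ dual, x ≠ 0 → (n : ℝ) ≤ c ^ 2 * ∑ i, x i ^ 2 := fun x hx hx₀ ↦ by
    rw [← hc]
    gcongr
    exact (le_sqrt hlam.le (by positivity)).1 (hmin x hx hx₀)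
  have hsc : 4 * c ^ 2 ≤ s ^ 2 := by
    have h2c : 2 * c ≤ s := by rwa [mul_div_assoc] at hs
    nlinarith [(by positivity : 0 ≤ c)]
  have := tsum_exp_neg_le_of_separated (S := {x | x ∈ dual ∧ x ≠ 0})
    (fun x hx y hy hxy ↦ by
      simpa using hnorm (x - y) (sub_mem_integralDual hx.1 hy.1) (sub_ne_zero.2 hxy))
    (fun x hx ↦ by simpa using hnorm x hx.1 hx.2) hsc
  rw [Fintype.card_fin] at this
  exact this

/-- (Smoothing parameter bound, Micciancio–Regev.) Let
`Λ = span_ℤ(B) ⊂ ℝⁿ` be a full-rank lattice with dual `Λ*`, and let `λ₁ > 0` be a lower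
bound on the length of every nonzero dual vector. If `s ≥ 2√n / λ₁`, then
`∑_{λ* ∈ Λ*\{0}} e^{-π s² ‖λ*‖²} ≤ 2^{-n}`; in other words the smoothing parameter
satisfies `η_ε(Λ) ≤ 2√n / λ₁(Λ*)` for `ε = 2^{-n}`. -/
theorem smoothing_parameter_le_of_dual_min_distance
    (n : ℕ) (hn : 0 < n) (B : Module.Basis (Fin n) ℝ (Fin n → ℝ)) (lam1 s : ℝ) (hlam : 0 < lam1)
    (hmin : ∀ x : Fin n → ℝ,
        (∀ y ∈ Submodule.span ℤ (Set.range B), ∃ m : ℤ, ∑ i, x i * y i = (m : ℝ)) →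
        x ≠ 0 → lam1 ≤ Real.sqrt (∑ i, x i ^ 2))
    (hs : 2 * Real.sqrt n / lam1 ≤ s) :
    ∑' l : {x : Fin n → ℝ //
          (∀ y ∈ Submodule.span ℤ (Set.range B), ∃ m : ℤ, ∑ i, x i * y i = (m : ℝ)) ∧ x ≠ 0},
        Real.exp (-π * s ^ 2 * ∑ i, (l : Fin n → ℝ) i ^ 2)
      ≤ (2 : ℝ)⁻¹ ^ n :=
  smoothing_parameter_le_of_dual_min_distance_general n B lam1 s hlam hmin hs
end

section
/- Let X ~ D_{Λ+c,σ} be a discrete Gaussian on a shifted lattice Λ+c ⊂ ℂ^k, and A ∈ M_k(ℂ). If ε := ε_Λ(σ) < 1, then for all t ∈ ℂ^k, E[e^{Re(t† A X)}] ≤ ((1+ε)/(1−ε)) · e^{(σ²/2)‖A†t‖²}. In particular, X is δ-subgaussian with parameter σ, where δ = ln((1+ε)/(1−ε)). -/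
/-!
Completing the square gives `f_σ(x) e^{Re(u†x)} = e^{σ²‖u‖²/4} f_σ(σ²u/2 - x)`. Summed over
`x ∈ Λ + c` with `u = A†t`, the moment generating function becomes
`e^{σ²‖u‖²/4} f_{σ,σ²u/2-c}(Λ) / f_{σ,-c}(Λ)`, where `gaussianMass Λ σ c = f_{σ,c}(Λ)`.
Flatness puts `V` times each lattice sum in `[1 - ε, 1 + ε]`, so the quotient is at most
`(1 + ε)/(1 - ε)`, and `e^{σ²‖u‖²/4} ≤ e^{σ²‖u‖²/2}`.
-/

open scoped Real Matrix

open RCLike in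
theorem neg_norm_sq_div_add_re_inner {𝕜 E : Type*} [RCLike 𝕜] [NormedAddCommGroup E]
    [InnerProductSpace 𝕜 E] {s : ℝ} (hs : s ≠ 0) (u x : E) :
    -‖x‖ ^ 2 / s + re (inner 𝕜 u x) = s / 4 * ‖u‖ ^ 2 - ‖((s / 2 : ℝ) : 𝕜) • u - x‖ ^ 2 / s := by
  rw [norm_sub_sq (𝕜 := 𝕜), norm_smul, inner_smul_left, conj_ofReal, re_ofReal_mul, mul_pow,
    norm_ofReal, sq_abs]
  field_simp
  ring

noncomputable def gaussianDensity (k : ℕ) (σ : ℝ) (x : Fin k → ℂ) : ℝ :=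
  (π * σ ^ 2)⁻¹ ^ k * Real.exp (-(∑ i, ‖x i‖ ^ 2) / σ ^ 2)

theorem gaussianDensity_neg (k : ℕ) (σ : ℝ) (x : Fin k → ℂ) :
    gaussianDensity k σ (-x) = gaussianDensity k σ x := by
  simp [gaussianDensity]

theorem gaussianDensity_mul_exp_re_dotProduct {k : ℕ} {σ : ℝ} (hσ : σ ≠ 0) (u x : Fin k → ℂ) :
    gaussianDensity k σ x * Real.exp (star u ⬝ᵥ x).re
      = Real.exp (σ ^ 2 / 4 * ∑ i, ‖u i‖ ^ 2)
        * gaussianDensity k σ (((σ ^ 2 / 2 : ℝ) : ℂ) • u - x) := by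
  have h : -(∑ i, ‖x i‖ ^ 2) / σ ^ 2 + (star u ⬝ᵥ x).re = σ ^ 2 / 4 * ∑ i, ‖u i‖ ^ 2
      - (∑ i, ‖(((σ ^ 2 / 2 : ℝ) : ℂ) • u - x) i‖ ^ 2) / σ ^ 2 := by
    simpa [EuclideanSpace.norm_sq_eq, EuclideanSpace.inner_toLp_toLp, dotProduct_comm x] using
      neg_norm_sq_div_add_re_inner (𝕜 := ℂ) (pow_ne_zero 2 hσ) (WithLp.toLp 2 u) (WithLp.toLp 2 x)
  rw [gaussianDensity, gaussianDensity, mul_assoc, ← Real.exp_add, mul_left_comm,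
    ← Real.exp_add, h, sub_eq_add_neg, neg_div]

noncomputable def gaussianMass {k : ℕ} (Λ : AddSubgroup (Fin k → ℂ)) (σ : ℝ) (c : Fin k → ℂ) :
    ℝ :=
  ∑' l : Λ, gaussianDensity k σ (c - l)

theorem tsum_gaussianDensity_div_mul_exp_re {k : ℕ} (Λ : AddSubgroup (Fin k → ℂ)) {σ : ℝ}
    (hσ : σ ≠ 0) (c u : Fin k → ℂ) :
    ∑' l : Λ, gaussianDensity k σ (l + c) / (∑' m : Λ, gaussianDensity k σ (m + c))
        * Real.exp (star u ⬝ᵥ ((l : Fin k → ℂ) + c)).re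
      = Real.exp (σ ^ 2 / 4 * ∑ i, ‖u i‖ ^ 2)
        * (gaussianMass Λ σ (((σ ^ 2 / 2 : ℝ) : ℂ) • u - c) / gaussianMass Λ σ (-c)) := by
  have hmass : ∑' m : Λ, gaussianDensity k σ (m + c) = gaussianMass Λ σ (-c) :=
    tsum_congr fun m => by rw [← gaussianDensity_neg, neg_add_rev, ← sub_eq_add_neg]
  rw [hmass, gaussianMass.eq_1 Λ σ (_ • u - c), ← tsum_div_const, ← tsum_mul_left]
  refine tsum_congr fun l => ?_
  rw [div_mul_eq_mul_div, gaussianDensity_mul_exp_re_dotProduct hσ, mul_div_assoc,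
    sub_add_eq_sub_sub_swap]

theorem div_le_of_abs_mul_sub_one_le {V S T ε : ℝ} (hε : ε < 1)
    (hT : |V * T - 1| ≤ ε) (hS : |V * S - 1| ≤ ε) : T / S ≤ (1 + ε) / (1 - ε) := by
  have hVS : 1 - ε ≤ V * S := by linarith [(abs_le.mp hS).1]
  have hVT : V * T ≤ 1 + ε := by linarith [(abs_le.mp hT).2]
  have hV : V ≠ 0 := by rintro rfl; linarith
  rw [← mul_div_mul_left T S hV]
  exact div_le_div₀ (by linarith [abs_nonneg (V * S - 1)]) hVT (by linarith) hVS

theorem discrete_gaussian_mgf_bound_general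
    (k : ℕ) (Λ : AddSubgroup (Fin k → ℂ)) (V sig ε : ℝ) (hsig : 0 < sig)
    (hε : ε < 1)
    (hflat : ∀ c' : Fin k → ℂ,
      |V * (∑' l : Λ, (π * sig ^ 2)⁻¹ ^ k *
          Real.exp (-(∑ i, ‖c' i - (l : Fin k → ℂ) i‖ ^ 2) / sig ^ 2)) - 1| ≤ ε)
    (c : Fin k → ℂ) (A : Matrix (Fin k) (Fin k) ℂ) :
    ∀ t : Fin k → ℂ,
      (∑' l : Λ,
          ((π * sig ^ 2)⁻¹ ^ k *
              Real.exp (-(∑ i, ‖(l : Fin k → ℂ) i + c i‖ ^ 2) / sig ^ 2) /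
            ∑' m : Λ, (π * sig ^ 2)⁻¹ ^ k *
              Real.exp (-(∑ i, ‖(m : Fin k → ℂ) i + c i‖ ^ 2) / sig ^ 2)) *
            Real.exp ((star t ⬝ᵥ (A *ᵥ ((l : Fin k → ℂ) + c))).re))
        ≤ ((1 + ε) / (1 - ε)) * Real.exp (sig ^ 2 / 2 * ∑ i, ‖(Aᴴ *ᵥ t) i‖ ^ 2) := by
  intro t
  have hadjoint : ∀ x, star t ⬝ᵥ (A *ᵥ x) = star (Aᴴ *ᵥ t) ⬝ᵥ x := fun x => by
    rw [Matrix.dotProduct_mulVec, Matrix.star_mulVec, Matrix.conjTranspose_conjTranspose]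
  simp_rw [hadjoint]
  calc _ = Real.exp (sig ^ 2 / 4 * ∑ i, ‖(Aᴴ *ᵥ t) i‖ ^ 2)
          * (gaussianMass Λ sig (((sig ^ 2 / 2 : ℝ) : ℂ) • (Aᴴ *ᵥ t) - c)
            / gaussianMass Λ sig (-c)) :=
        tsum_gaussianDensity_div_mul_exp_re Λ hsig.ne' c _
    _ ≤ Real.exp (sig ^ 2 / 4 * ∑ i, ‖(Aᴴ *ᵥ t) i‖ ^ 2) * ((1 + ε) / (1 - ε)) := by
        gcongr _ * ?_
        exact div_le_of_abs_mul_sub_one_le hε (hflat _) (hflat _)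
    _ ≤ ((1 + ε) / (1 - ε)) * Real.exp (sig ^ 2 / 2 * ∑ i, ‖(Aᴴ *ᵥ t) i‖ ^ 2) := by
        rw [mul_comm]
        have hratio_nonneg : 0 ≤ (1 + ε) / (1 - ε) :=
          div_nonneg (by linarith [(abs_nonneg _).trans (hflat 0)]) (by linarith)
        gcongr
        norm_num

/-- (Moment generating function of the discrete Gaussian.) Let
`X ~ D_{Λ+c,σ}` be a discrete Gaussian on the shifted lattice `Λ + c ⊂ ℂᵏ`, i.e.
`P(X = λ + c) = f_σ(λ+c) / f_{σ,-c}(Λ)` with `f_σ(x) = (πσ²)^{-k} e^{-‖x‖²/σ²}`, and let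
`A ∈ M_k(ℂ)`. If the flatness factor satisfies `ε := ε_Λ(σ) < 1` (`V` is the covolume of
`Λ`), then for every `t ∈ ℂᵏ`,
`E[e^{Re(t†AX)}] ≤ ((1+ε)/(1−ε)) e^{(σ²/2)‖A†t‖²}`; in particular `X` is `δ`-subgaussian
with parameter `σ` for `δ = ln((1+ε)/(1−ε))`. -/
theorem discrete_gaussian_mgf_bound
    (k : ℕ) (Λ : AddSubgroup (Fin k → ℂ)) (V sig ε : ℝ) (hV : 0 < V) (hsig : 0 < sig)
    (hε : ε < 1)
    (hflat : ∀ c' : Fin k → ℂ,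
      |V * (∑' l : Λ, (π * sig ^ 2)⁻¹ ^ k *
          Real.exp (-(∑ i, ‖c' i - (l : Fin k → ℂ) i‖ ^ 2) / sig ^ 2)) - 1| ≤ ε)
    (c : Fin k → ℂ) (A : Matrix (Fin k) (Fin k) ℂ) :
    ∀ t : Fin k → ℂ,
      (∑' l : Λ,
          ((π * sig ^ 2)⁻¹ ^ k *
              Real.exp (-(∑ i, ‖(l : Fin k → ℂ) i + c i‖ ^ 2) / sig ^ 2) /
            ∑' m : Λ, (π * sig ^ 2)⁻¹ ^ k *
              Real.exp (-(∑ i, ‖(m : Fin k → ℂ) i + c i‖ ^ 2) / sig ^ 2)) *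
            Real.exp ((star t ⬝ᵥ (A *ᵥ ((l : Fin k → ℂ) + c))).re))
        ≤ ((1 + ε) / (1 - ε)) * Real.exp (sig ^ 2 / 2 * ∑ i, ‖(Aᴴ *ᵥ t) i‖ ^ 2) :=
  discrete_gaussian_mgf_bound_general k Λ V sig ε hsig hε hflat c A
end

section
/- Let w ~ N_ℂ(0, σ_b² I) and let x be δ-subgaussian with parameter √P, with w and x independent, and let ρ_b = P/σ_b². If matrices Q₁, R satisfy Q₁†Q₁ + (1/ρ_b)(R^{-1})†R^{-1} = I, then v = Q₁†w − (1/ρ_b)(R^{-1})†x satisfies E[e^{Re(t†v)}] ≤ e^δ e^{(σ_b²/2)‖t‖²}. -/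
open MeasureTheory
open scoped Matrix

lemma re_star_dot (k : ℕ) (v : Fin k → ℂ) :
    (star v ⬝ᵥ v).re = ∑ i, ‖v i‖ ^ 2 := by
  simp only [dotProduct, Pi.star_apply, Complex.re_sum, RCLike.star_def,
    Complex.conj_mul', ← Complex.ofReal_pow, Complex.ofReal_re]

lemma key_identity (k : ℕ) (c : ℝ) (Q₁ R : Matrix (Fin k) (Fin k) ℂ) (t : Fin k → ℂ)
    (hQR : Q₁ᴴ * Q₁ + c • ((R⁻¹)ᴴ * R⁻¹) = 1) :
    (∑ i, ‖(Q₁ *ᵥ t) i‖ ^ 2) + c * ∑ i, ‖(R⁻¹ *ᵥ t) i‖ ^ 2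
      = ∑ i, ‖t i‖ ^ 2 := by
  have h := congrArg (fun M : Matrix (Fin k) (Fin k) ℂ => (star t ⬝ᵥ (M *ᵥ t)).re) hQR
  simp only [Matrix.add_mulVec, Matrix.smul_mulVec, dotProduct_add,
    dotProduct_smul, Matrix.one_mulVec, ← Matrix.mulVec_mulVec,
    Matrix.dotProduct_mulVec (star t), ← Matrix.star_mulVec,
    Matrix.conjTranspose_conjTranspose] at h
  rw [Complex.add_re, Complex.real_smul, Complex.mul_re, Complex.ofReal_re,
    Complex.ofReal_im] at h
  rw [re_star_dot, re_star_dot, re_star_dot] at h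
  linarith [h]

lemma meas_exp_dot (k : ℕ) (s : Fin k → ℂ) :
    Measurable (fun v : Fin k → ℂ => Real.exp ((star s ⬝ᵥ v).re)) := by
  have hdp : Measurable (fun v : Fin k → ℂ => star s ⬝ᵥ v) := by
    simp only [dotProduct]
    exact Finset.measurable_sum _ fun i _ => (measurable_pi_apply i).const_mul _
  exact Real.measurable_exp.comp (Complex.measurable_re.comp hdp)

/-- (The equivalent noise after MMSE-GDFE is subgaussian.) Let
`w ~ N_ℂ(0, σ_b² I)` (characterized by its MGF `E[e^{Re(t†w)}] = e^{(σ_b²/2)‖t‖²}`) and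
`x` a `δ`-subgaussian vector with parameter `√P`, independent of `w`. If `Q₁` and the
invertible matrix `R` satisfy `Q₁†Q₁ + (1/ρ_b)(R⁻¹)†R⁻¹ = I` with `ρ_b = P/σ_b²`, then
`v = Q₁†w − (1/ρ_b)(R⁻¹)†x` satisfies `E[e^{Re(t†v)}] ≤ e^δ e^{(σ_b²/2)‖t‖²}` for all `t`,
i.e. `v` is `δ`-subgaussian with parameter `σ_b`. -/
theorem equivalent_noise_subgaussian
    (k : ℕ) (Ω : Type*) [MeasureSpace Ω] [IsProbabilityMeasure (volume : Measure Ω)]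
    (w x : Ω → Fin k → ℂ) (hw' : Measurable w) (hx' : Measurable x)
    (hindep : ProbabilityTheory.IndepFun w x)
    (δ P σb : ℝ) (hP : 0 < P) (hσ : 0 < σb)
    (Q₁ R : Matrix (Fin k) (Fin k) ℂ) (hR : IsUnit R)
    (hQR : Q₁ᴴ * Q₁ + (P / σb ^ 2)⁻¹ • ((R⁻¹)ᴴ * R⁻¹) = 1)
    (hw : ∀ t : Fin k → ℂ,
      (∫ ω, Real.exp ((star t ⬝ᵥ w ω).re))
        = Real.exp (σb ^ 2 / 2 * ∑ i, ‖t i‖ ^ 2))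
    (hx : ∀ t : Fin k → ℂ,
      (∫ ω, Real.exp ((star t ⬝ᵥ x ω).re))
        ≤ Real.exp δ * Real.exp (P / 2 * ∑ i, ‖t i‖ ^ 2)) :
    ∀ t : Fin k → ℂ,
      (∫ ω, Real.exp ((star t ⬝ᵥ
          (Q₁ᴴ *ᵥ w ω - (P / σb ^ 2)⁻¹ • ((R⁻¹)ᴴ *ᵥ x ω))).re))
        ≤ Real.exp δ * Real.exp (σb ^ 2 / 2 * ∑ i, ‖t i‖ ^ 2) := by
  intro t
  set c : ℝ := (P / σb ^ 2)⁻¹ with hc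
  have hc0 : 0 < c := by positivity
  have hcval : c = σb ^ 2 / P := by rw [hc, inv_div]
  set s : Fin k → ℂ := Q₁ *ᵥ t with hs
  set u : Fin k → ℂ := R⁻¹ *ᵥ t with hu
  set t' : Fin k → ℂ := (-(c : ℂ)) • u with ht'
  -- pointwise splitting of the integrand
  have hpt : ∀ ω, Real.exp ((star t ⬝ᵥ
        (Q₁ᴴ *ᵥ w ω - c • ((R⁻¹)ᴴ *ᵥ x ω))).re)
      = Real.exp ((star s ⬝ᵥ w ω).re) * Real.exp ((star t' ⬝ᵥ x ω).re) := by
    intro ω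
    have h1 : star t ⬝ᵥ (Q₁ᴴ *ᵥ w ω) = star s ⬝ᵥ w ω := by
      rw [Matrix.dotProduct_mulVec, hs, Matrix.star_mulVec]
    have h2 : star t ⬝ᵥ ((R⁻¹)ᴴ *ᵥ x ω) = star u ⬝ᵥ x ω := by
      rw [Matrix.dotProduct_mulVec, hu, Matrix.star_mulVec]
    have h3 : star t' ⬝ᵥ x ω = (-(c : ℂ)) * (star u ⬝ᵥ x ω) := by
      rw [ht', star_smul, smul_dotProduct]
      simp [smul_eq_mul]
    rw [dotProduct_sub, dotProduct_smul, h1, h2, ← Real.exp_add]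
    congr 1
    rw [Complex.sub_re, Complex.real_smul, Complex.mul_re, Complex.ofReal_re,
      Complex.ofReal_im, h3, Complex.mul_re]
    simp
    ring
  simp only [hpt]
  -- independence
  have hX : Measurable (fun ω => Real.exp ((star s ⬝ᵥ w ω).re)) :=
    (meas_exp_dot k s).comp hw'
  have hY : Measurable (fun ω => Real.exp ((star t' ⬝ᵥ x ω).re)) :=
    (meas_exp_dot k t').comp hx'
  have hind2 : ProbabilityTheory.IndepFun
      (fun ω => Real.exp ((star s ⬝ᵥ w ω).re))
      (fun ω => Real.exp ((star t' ⬝ᵥ x ω).re)) :=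
    hindep.comp (meas_exp_dot k s) (meas_exp_dot k t')
  have hsplit := hind2.integral_fun_mul_eq_mul_integral
    hX.aestronglyMeasurable hY.aestronglyMeasurable
  have hsplit' : (∫ ω, Real.exp ((star s ⬝ᵥ w ω).re) * Real.exp ((star t' ⬝ᵥ x ω).re))
      = (∫ ω, Real.exp ((star s ⬝ᵥ w ω).re)) * ∫ ω, Real.exp ((star t' ⬝ᵥ x ω).re) :=
    hsplit
  rw [hsplit', hw s]
  -- the norm of t'
  have ht'norm : (∑ i, ‖t' i‖ ^ 2) = c ^ 2 * ∑ i, ‖u i‖ ^ 2 := by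
    rw [Finset.mul_sum]
    congr 1; ext i
    simp only [ht', Pi.smul_apply, smul_eq_mul, norm_mul, norm_neg,
      Complex.norm_real, Real.norm_eq_abs, abs_of_pos hc0, mul_pow]
  calc Real.exp (σb ^ 2 / 2 * ∑ i, ‖s i‖ ^ 2)
        * ∫ ω, Real.exp ((star t' ⬝ᵥ x ω).re)
      ≤ Real.exp (σb ^ 2 / 2 * ∑ i, ‖s i‖ ^ 2)
        * (Real.exp δ * Real.exp (P / 2 * ∑ i, ‖t' i‖ ^ 2)) := by
        exact mul_le_mul_of_nonneg_left (hx t') (Real.exp_pos _).le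
    _ = Real.exp δ * Real.exp (σb ^ 2 / 2 * ∑ i, ‖t i‖ ^ 2) := by
        rw [ht'norm, ← mul_assoc, mul_comm _ (Real.exp δ), mul_assoc, ← Real.exp_add]
        have hkey := key_identity k c Q₁ R t hQR
        rw [← hs, ← hu] at hkey
        have hPc : P * c ^ 2 = σb ^ 2 * c := by
          rw [hcval]; field_simp
        have harg : σb ^ 2 / 2 * ∑ i, ‖s i‖ ^ 2
            + P / 2 * (c ^ 2 * ∑ i, ‖u i‖ ^ 2)
            = σb ^ 2 / 2 * ∑ i, ‖t i‖ ^ 2 := by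
          linear_combination (σb ^ 2 / 2) * hkey + ((∑ i, ‖u i‖ ^ 2) / 2) * hPc
        rw [harg]
end

section
/- Suppose two random variables M and Z given each m have output distributions p_{Z|M=m} all within total variation ε ≤ 1/2 of a common density f. Then for M taking at most e^{kR} values, the mutual information satisfies I(M; Z) ≤ 8εkR − 8ε log(8ε) (for 8ε < 1). -/
/-!
Write `S = ∑ m', q m' * p m'` for the output density. Adding `S - p m`, which integrates to
zero, turns the `m`-th divergence into `∫ S * klFun (p m / S)`. Since `q m * p m ≤ S`, the ratio
`p m / S` lies in `[0, 1 / q m]`, where `klFun x ≤ (1 - log (q m)) * |x - 1|`; hence the divergence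
is at most `(1 - log (q m)) * ∫ |p m - S|`, and `∫ |p m - S| ≤ (1 - q m) * 2ε` because every
`p m'` is within `2ε` of `p m`. As `q (1 - q) (1 - log q) ≤ 2 negMulLog q`, summing gives
`I(M;Z) ≤ 4ε H(q) ≤ 4ε log |ι| ≤ 4εkR`, which is below the stated bound.
-/

open MeasureTheory Real InformationTheory

lemma klFun_le_one_sub_log_mul_abs {q x : ℝ} (hq : 0 < q) (hq1 : q ≤ 1) (hx : 0 ≤ x)
    (hqx : q * x ≤ 1) : klFun x ≤ (1 - log q) * |x - 1| := by
  have hlogq : log q ≤ 0 := log_nonpos hq.le hq1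
  rw [klFun_apply]
  rcases le_total x 1 with hx1 | hx1
  · have : x * log x ≤ 0 := mul_log_nonpos hx hx1
    rw [abs_of_nonpos (by linarith)]
    nlinarith
  · have hlogx : log x ≤ x - 1 := log_le_sub_one_of_pos (by linarith)
    have hlogxq : log x ≤ -log q := by
      simpa using log_le_log (by linarith) ((le_div_iff₀' hq).2 hqx)
    rw [abs_of_nonneg (by linarith)]
    nlinarith

lemma mul_log_div_add_sub_eq_mul_klFun {a s : ℝ} (hs : 0 < s) :
    a * log (a / s) + s - a = s * klFun (a / s) := by
  rw [klFun_apply]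
  field_simp

lemma mul_log_div_add_sub_mem_Icc {q a s : ℝ} (hq : 0 < q) (hq1 : q ≤ 1) (ha : 0 ≤ a)
    (has : q * a ≤ s) :
    a * log (a / s) + s - a ∈ Set.Icc 0 ((1 - log q) * |a - s|) := by
  rcases (mul_nonneg hq.le ha |>.trans has).eq_or_lt with hs | hs
  · obtain rfl : a = 0 := by nlinarith
    simp [← hs]
  · rw [mul_log_div_add_sub_eq_mul_klFun hs]
    refine ⟨mul_nonneg hs.le (klFun_nonneg (by positivity)), ?_⟩
    have hqa : q * (a / s) ≤ 1 := by rw [← mul_div_assoc, div_le_one hs]; exact has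
    calc s * klFun (a / s) ≤ s * ((1 - log q) * |a / s - 1|) :=
          mul_le_mul_of_nonneg_left
            (klFun_le_one_sub_log_mul_abs hq hq1 (by positivity) hqa) hs.le
      _ = (1 - log q) * |a - s| := by
          rw [show a - s = s * (a / s - 1) by field_simp, abs_mul, abs_of_pos hs]
          ring

section Integral

variable {α : Type*} [MeasurableSpace α] {μ : Measure α}

lemma integral_mul_log_div_le {q : ℝ} {p s : α → ℝ} (hq : 0 < q) (hq1 : q ≤ 1)
    (hp0 : ∀ x, 0 ≤ p x) (hps : ∀ x, q * p x ≤ s x) (hp : Integrable p μ)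
    (hs : Integrable s μ) (hps_int : ∫ x, p x ∂μ = ∫ x, s x ∂μ) :
    ∫ x, p x * log (p x / s x) ∂μ ≤ (1 - log q) * ∫ x, |p x - s x| ∂μ := by
  set g : α → ℝ := fun x => p x * log (p x / s x) + s x - p x
  have hg x : g x ∈ Set.Icc 0 ((1 - log q) * |p x - s x|) :=
    mul_log_div_add_sub_mem_Icc hq hq1 (hp0 x) (hps x)
  have hbound : Integrable (fun x => (1 - log q) * |p x - s x|) μ :=
    (hp.sub hs).abs.const_mul _
  have hg_int : Integrable g μ := by
    refine hbound.mono' ?_ (ae_of_all _ fun x => ?_)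
    · have := hp.aemeasurable; have := hs.aemeasurable
      exact (by fun_prop : AEMeasurable g μ).aestronglyMeasurable
    · rw [norm_of_nonneg (hg x).1]; exact (hg x).2
  have hsplit : ∫ x, p x * log (p x / s x) ∂μ = ∫ x, g x ∂μ := by
    have : (fun x => p x * log (p x / s x)) = fun x => g x - (s x - p x) := by
      ext x; simp only [g]; ring
    rw [this, integral_sub (g := fun x => s x - p x) hg_int (hs.sub hp), integral_sub hs hp,
      hps_int, sub_self, sub_zero]
  rw [hsplit, ← integral_const_mul]
  exact integral_mono hg_int hbound fun x => (hg x).2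

lemma integral_abs_sub_le_add {f g h : α → ℝ} (hf : Integrable f μ) (hg : Integrable g μ)
    (hh : Integrable h μ) :
    ∫ x, |f x - g x| ∂μ ≤ ∫ x, |f x - h x| ∂μ + ∫ x, |g x - h x| ∂μ := by
  have hfh : Integrable (fun x => |f x - h x|) μ := (hf.sub hh).abs
  have hgh : Integrable (fun x => |g x - h x|) μ := (hg.sub hh).abs
  rw [← integral_add hfh hgh]
  refine integral_mono (hf.sub hg).abs (hfh.add hgh) fun x => ?_
  simpa only [abs_sub_comm (g x)] using abs_sub_le (f x) (h x) (g x)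

variable {ι : Type*} [Fintype ι] {q : ι → ℝ} {p : ι → α → ℝ}

lemma integral_abs_sub_mixture_le (hq0 : ∀ m, 0 ≤ q m) (hq1 : ∑ m, q m = 1)
    (hp : ∀ m, Integrable (p m) μ) {δ : ℝ} (hδ : ∀ m m', ∫ x, |p m x - p m' x| ∂μ ≤ δ)
    (m : ι) :
    ∫ x, |p m x - ∑ m', q m' * p m' x| ∂μ ≤ (1 - q m) * δ := by
  classical
  have hint m' : Integrable (fun x => q m' * |p m x - p m' x|) μ :=
    ((hp m).sub (hp m')).abs.const_mul _
  have hpt x : |p m x - ∑ m', q m' * p m' x| ≤ ∑ m', q m' * |p m x - p m' x| := by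
    have : p m x - ∑ m', q m' * p m' x = ∑ m', q m' * (p m x - p m' x) := by
      simp only [mul_sub, Finset.sum_sub_distrib, ← Finset.sum_mul, hq1, one_mul]
    rw [this]
    refine (Finset.abs_sum_le_sum_abs _ _).trans_eq (Finset.sum_congr rfl fun m' _ => ?_)
    rw [abs_mul, abs_of_nonneg (hq0 m')]
  calc ∫ x, |p m x - ∑ m', q m' * p m' x| ∂μ
      ≤ ∫ x, ∑ m', q m' * |p m x - p m' x| ∂μ :=
        integral_mono (((hp m).sub (integrable_finsetSum _ fun m' _ =>
          (hp m').const_mul (q m'))).abs) (integrable_finsetSum _ fun m' _ => hint m') hpt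
    _ = ∑ m' ∈ Finset.univ.erase m, q m' * ∫ x, |p m x - p m' x| ∂μ := by
        rw [integral_finsetSum _ fun m' _ => hint m', Finset.sum_erase _ (by simp)]
        simp only [integral_const_mul]
    _ ≤ ∑ m' ∈ Finset.univ.erase m, q m' * δ :=
        Finset.sum_le_sum fun m' _ => mul_le_mul_of_nonneg_left (hδ m m') (hq0 m')
    _ = (1 - q m) * δ := by
        rw [← Finset.sum_mul, Finset.sum_erase_eq_sub (Finset.mem_univ m), hq1]

lemma mul_integral_mul_log_div_mixture_le (hq0 : ∀ m, 0 ≤ q m) (hq1 : ∑ m, q m = 1)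
    (hp0 : ∀ m x, 0 ≤ p m x) (hp : ∀ m, Integrable (p m) μ) (hp1 : ∀ m, ∫ x, p m x ∂μ = 1)
    {δ : ℝ} (hδ : ∀ m m', ∫ x, |p m x - p m' x| ∂μ ≤ δ) (m : ι) :
    q m * ∫ x, p m x * log (p m x / ∑ m', q m' * p m' x) ∂μ ≤ 2 * δ * negMulLog (q m) := by
  have hq1' : q m ≤ 1 := hq1 ▸ Finset.single_le_sum (fun m' _ => hq0 m') (Finset.mem_univ m)
  rcases (hq0 m).eq_or_lt with hqm | hqm
  · simp [← hqm]
  have hmix : Integrable (fun x => ∑ m', q m' * p m' x) μ :=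
    integrable_finsetSum _ fun m' _ => (hp m').const_mul _
  have hmix1 : ∫ x, ∑ m', q m' * p m' x ∂μ = ∫ x, p m x ∂μ := by
    simp only [integral_finsetSum _ fun m' _ => (hp m').const_mul _, integral_const_mul, hp1,
      mul_one, hq1]
  have hle x : q m * p m x ≤ ∑ m', q m' * p m' x :=
    Finset.single_le_sum (f := fun m' => q m' * p m' x)
      (fun m' _ => mul_nonneg (hq0 m') (hp0 m' x)) (Finset.mem_univ m)
  have hδ0 : 0 ≤ δ := (integral_nonneg fun _ => abs_nonneg _).trans (hδ m m)
  calc q m * ∫ x, p m x * log (p m x / ∑ m', q m' * p m' x) ∂μ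
      ≤ q m * ((1 - log (q m)) * ((1 - q m) * δ)) := by
        gcongr
        exact (integral_mul_log_div_le hqm hq1' (hp0 m) hle (hp m) hmix hmix1.symm).trans
          (mul_le_mul_of_nonneg_left (integral_abs_sub_mixture_le hq0 hq1 hp hδ m)
            (by linarith [log_nonpos hqm.le hq1']))
    _ = δ * (q m * (1 - q m) + (1 - q m) * negMulLog (q m)) := by rw [negMulLog]; ring
    _ ≤ δ * (negMulLog (q m) + negMulLog (q m)) := by
        have hH : 0 ≤ negMulLog (q m) := negMulLog_nonneg hqm.le hq1'
        gcongr
        · rw [negMulLog]; nlinarith [log_le_sub_one_of_pos hqm]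
        · exact mul_le_of_le_one_left hH (by linarith)
    _ = 2 * δ * negMulLog (q m) := by ring

end Integral

lemma sum_negMulLog_le_log_card {ι : Type*} [Fintype ι] [Nonempty ι] {q : ι → ℝ}
    (hq0 : ∀ m, 0 ≤ q m) (hq1 : ∑ m, q m = 1) :
    ∑ m, negMulLog (q m) ≤ log (Fintype.card ι) := by
  have hN : (0 : ℝ) < Fintype.card ι := by exact_mod_cast Fintype.card_pos
  have hjensen := concaveOn_negMulLog.le_map_sum (t := Finset.univ)
    (w := fun _ => (Fintype.card ι : ℝ)⁻¹) (p := q) (fun _ _ => by positivity)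
    (by simp [hN.ne']) (fun m _ => Set.mem_Ici.2 (hq0 m))
  simp only [smul_eq_mul, ← Finset.mul_sum, hq1, mul_one, negMulLog, log_inv] at hjensen
  rwa [neg_mul_neg, inv_mul_le_iff₀ hN, ← mul_assoc, mul_inv_cancel₀ hN.ne', one_mul] at hjensen

theorem mutual_information_le_of_tv_close_general
    (k : ℕ) (R ε : ℝ) (ι : Type*) [Fintype ι] [Nonempty ι]
    (q : ι → ℝ) (hq0 : ∀ m, 0 ≤ q m) (hq1 : ∑ m, q m = 1)
    (p : ι → (Fin k → ℂ) → ℝ) (hp0 : ∀ m z, 0 ≤ p m z)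
    (hp1 : ∀ m, (∫ z, p m z) = 1)
    (f : (Fin k → ℂ) → ℝ)
    (hf1 : (∫ z, f z) = 1)
    (hcard : (Fintype.card ι : ℝ) ≤ Real.exp (k * R))
    (hε8 : 8 * ε < 1)
    (hclose : ∀ m, (∫ z, |p m z - f z|) ≤ ε) :
    ∑ m, q m * ∫ z, p m z * Real.log (p m z / ∑ m', q m' * p m' z)
      ≤ 8 * ε * k * R - 8 * ε * Real.log (8 * ε) := by
  have hp m : Integrable (p m) := .of_integral_ne_zero (by simp [hp1 m])
  have hf : Integrable f := .of_integral_ne_zero (by simp [hf1])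
  have hpair m m' : ∫ z, |p m z - p m' z| ≤ 2 * ε := by
    linarith [integral_abs_sub_le_add (hp m) (hp m') hf, hclose m, hclose m']
  obtain ⟨m₀⟩ := ‹Nonempty ι›
  have hε0 : 0 ≤ ε := (integral_nonneg fun _ => abs_nonneg _).trans (hclose m₀)
  have hN : (1 : ℝ) ≤ Fintype.card ι := by exact_mod_cast Fintype.card_pos
  have hlogN : log (Fintype.card ι) ≤ k * R :=
    (log_le_log (by positivity) hcard).trans_eq (log_exp _)
  have hlogN0 : 0 ≤ log (Fintype.card ι) := log_nonneg hN
  have hlog8ε : log (8 * ε) ≤ 0 := log_nonpos (by positivity) hε8.le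
  calc ∑ m, q m * ∫ z, p m z * log (p m z / ∑ m', q m' * p m' z)
      ≤ ∑ m, 2 * (2 * ε) * negMulLog (q m) := Finset.sum_le_sum fun m _ =>
        mul_integral_mul_log_div_mixture_le hq0 hq1 hp0 hp hp1 hpair m
    _ ≤ 4 * ε * log (Fintype.card ι) := by
        rw [← Finset.mul_sum, show 2 * (2 * ε) = 4 * ε by ring]
        exact mul_le_mul_of_nonneg_left (sum_negMulLog_le_log_card hq0 hq1) (by positivity)
    _ ≤ 8 * ε * k * R - 8 * ε * log (8 * ε) := by
        linarith [mul_le_mul_of_nonneg_left hlogN hε0, mul_nonneg hε0 hlogN0,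
          mul_nonpos_of_nonneg_of_nonpos hε0 hlog8ε]

/-- (Mutual information bound from total-variation closeness; cf. Csiszár.)
Let `M` be a discrete message with distribution `q` on a finite set of at most `e^{kR}`
values, and let `Z ∈ ℂᵏ` have conditional densities `p_m` given `M = m`, all within `L¹`
distance `ε ≤ 1/2` of a common density `f`. If `8ε < 1`, then the mutual information
`I(M;Z) = ∑_m q(m) ∫ p_m(z) log(p_m(z)/p_Z(z)) dz`, where `p_Z = ∑_m q(m) p_m` is the
output marginal, satisfies `I(M;Z) ≤ 8εkR − 8ε log(8ε)`. -/
theorem mutual_information_le_of_tv_close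
    (k : ℕ) (R ε : ℝ) (ι : Type*) [Fintype ι] [Nonempty ι]
    (q : ι → ℝ) (hq0 : ∀ m, 0 ≤ q m) (hq1 : ∑ m, q m = 1)
    (p : ι → (Fin k → ℂ) → ℝ) (hp0 : ∀ m z, 0 ≤ p m z)
    (hpmeas : ∀ m, Measurable (p m)) (hp1 : ∀ m, (∫ z, p m z) = 1)
    (f : (Fin k → ℂ) → ℝ) (hf0 : ∀ z, 0 ≤ f z) (hfmeas : Measurable f)
    (hf1 : (∫ z, f z) = 1)
    (hcard : (Fintype.card ι : ℝ) ≤ Real.exp (k * R))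
    (hε : ε ≤ 1 / 2) (hε8 : 8 * ε < 1)
    (hclose : ∀ m, (∫ z, |p m z - f z|) ≤ ε) :
    ∑ m, q m * ∫ z, p m z * Real.log (p m z / ∑ m', q m' * p m' z)
      ≤ 8 * ε * k * R - 8 * ε * Real.log (8 * ε) :=
  mutual_information_le_of_tv_close_general k R ε ι q hq0 hq1 p hp0 hp1 f hf1 hcard hε8 hclose
end
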